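/- For every complex number w with |Im w| < 3π/2, there exist r > 0, s ∈ (0,2), and t ∈ (−π/2, π/2) with r s² < 2 such that w = log(2r) + 3it − Log(1 + r s e^{2it} cos t). -/

import Mathlib

open Real Complex Filter Topology

lemma exp_ofReal_mul_I' (x : ℝ) :
    Complex.exp ((x:ℂ) * Complex.I) = (Real.cos x : ℂ) + (Real.sin x : ℂ) * Complex.I := by
  rw [Complex.exp_mul_I, Complex.ofReal_cos, Complex.ofReal_sin]

lemma strip_aux (a b : ℝ) (ha : 0 < a) (ha' : a < 3 * π / 2) :
    ∃ r s t : ℝ, 0 < r ∧ 0 < s ∧ s < 2 ∧ -(π / 2) < t ∧ t < π / 2 ∧ r * s ^ 2 < 2 ∧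
      0 < (1 + (r : ℂ) * s * Complex.exp (2 * t * Complex.I) * Real.cos t).im ∧
      (b + a * Complex.I : ℂ) = (Real.log (2 * r) : ℂ) + 3 * t * Complex.I
        - Complex.log (1 + (r : ℂ) * s * Complex.exp (2 * t * Complex.I) * Real.cos t) := by
  have hpi : (0:ℝ) < π := Real.pi_pos
  have h2a3 : 2 * a / 3 < π := by linarith
  have h2a3' : 0 < 2 * a / 3 := by linarith
  have hD0 : 0 < Real.sin (2 * a / 3) := Real.sin_pos_of_pos_of_lt_pi h2a3' h2a3
  set T : ℝ → ℝ := fun ε => a / 3 + ε * a with hT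
  set D : ℝ → ℝ := fun ε => Real.sin (2 * a / 3 - ε * a) with hDdef
  set P : ℝ → ℝ := fun ε => Real.sin (3 * (ε * a)) / D ε with hPdef
  set Rf : ℝ → ℝ := fun ε => Real.sin (2 * T ε) / D ε with hRfdef
  set rf : ℝ → ℝ := fun ε => Rf ε * Real.exp b / 2 with hrfdef
  set sf : ℝ → ℝ := fun ε => P ε / (rf ε * Real.cos (T ε)) with hsfdef
  -- limits as ε → 0⁺
  have hbase : Tendsto (fun ε : ℝ => ε) (𝓝[>] (0:ℝ)) (𝓝 0) :=
    tendsto_id.mono_left nhdsWithin_le_nhds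
  have hTlim : Tendsto T (𝓝[>] (0:ℝ)) (𝓝 (a / 3)) := by
    have : Tendsto (fun ε : ℝ => a / 3 + ε * a) (𝓝[>] (0:ℝ)) (𝓝 (a / 3 + 0 * a)) :=
      tendsto_const_nhds.add (hbase.mul tendsto_const_nhds)
    simpa using this
  have hDlim : Tendsto D (𝓝[>] (0:ℝ)) (𝓝 (Real.sin (2 * a / 3))) := by
    have : Tendsto (fun ε : ℝ => Real.sin (2 * a / 3 - ε * a)) (𝓝[>] (0:ℝ))
        (𝓝 (Real.sin (2 * a / 3 - 0 * a))) :=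
      (Real.continuous_sin.tendsto _).comp (tendsto_const_nhds.sub (hbase.mul tendsto_const_nhds))
    simpa using this
  have hPlim : Tendsto P (𝓝[>] (0:ℝ)) (𝓝 0) := by
    have hnum : Tendsto (fun ε : ℝ => Real.sin (3 * (ε * a))) (𝓝[>] (0:ℝ)) (𝓝 0) := by
      have : Tendsto (fun ε : ℝ => Real.sin (3 * (ε * a))) (𝓝[>] (0:ℝ))
          (𝓝 (Real.sin (3 * (0 * a)))) :=
        (Real.continuous_sin.tendsto _).comp (tendsto_const_nhds.mul (hbase.mul tendsto_const_nhds))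
      simpa using this
    have := hnum.div hDlim hD0.ne'
    simp at this; exact this
  have hRlim : Tendsto Rf (𝓝[>] (0:ℝ)) (𝓝 1) := by
    have hnum : Tendsto (fun ε : ℝ => Real.sin (2 * T ε)) (𝓝[>] (0:ℝ))
        (𝓝 (Real.sin (2 * a / 3))) := by
      have : Tendsto (fun ε : ℝ => Real.sin (2 * T ε)) (𝓝[>] (0:ℝ))
          (𝓝 (Real.sin (2 * (a / 3)))) :=
        (Real.continuous_sin.tendsto _).comp (tendsto_const_nhds.mul hTlim)
      simpa [show 2 * (a/3) = 2 * a / 3 by ring] using this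
    have := hnum.div hDlim hD0.ne'
    simp [div_self hD0.ne'] at this; exact this
  have hrlim : Tendsto rf (𝓝[>] (0:ℝ)) (𝓝 (Real.exp b / 2)) := by
    have := (hRlim.mul (tendsto_const_nhds : Tendsto (fun _ : ℝ => Real.exp b) _ _)).div_const 2
    simpa using this
  have hcoslim : Tendsto (fun ε => Real.cos (T ε)) (𝓝[>] (0:ℝ)) (𝓝 (Real.cos (a / 3))) :=
    (Real.continuous_cos.tendsto _).comp hTlim
  have hcos0 : 0 < Real.cos (a / 3) := by
    apply Real.cos_pos_of_mem_Ioo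
    constructor <;> [linarith; linarith]
  have hslim : Tendsto sf (𝓝[>] (0:ℝ)) (𝓝 0) := by
    have hden : Tendsto (fun ε => rf ε * Real.cos (T ε)) (𝓝[>] (0:ℝ))
        (𝓝 (Real.exp b / 2 * Real.cos (a / 3))) := hrlim.mul hcoslim
    have hden0 : Real.exp b / 2 * Real.cos (a / 3) ≠ 0 := by positivity
    have := hPlim.div hden hden0
    simp at this; exact this
  have hrs2lim : Tendsto (fun ε => rf ε * sf ε ^ 2) (𝓝[>] (0:ℝ)) (𝓝 0) := by
    have := hrlim.mul (hslim.pow 2)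
    simpa using this
  -- eventually facts
  have c1 : (0:ℝ) < π / (3 * a) := by positivity
  have c2 : (0:ℝ) < (π - 2 * a / 3) / (2 * a) := div_pos (by linarith) (by linarith)
  have c3 : (0:ℝ) < (π / 2 - a / 3) / a := div_pos (by linarith) ha
  set c := min (min (π / (3 * a)) (2/3)) (min ((π - 2 * a / 3) / (2 * a)) ((π / 2 - a / 3) / a)) with hcdef
  have hc : (0:ℝ) < c := by
    rw [hcdef]; simp only [lt_min_iff]; exact ⟨⟨c1, by norm_num⟩, c2, c3⟩
  have hev1 : ∀ᶠ ε in 𝓝[>] (0:ℝ), 0 < ε := eventually_mem_nhdsWithin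
  have hev2 : ∀ᶠ ε in 𝓝[>] (0:ℝ), ε < c := by
    filter_upwards [Ioo_mem_nhdsGT_of_mem (Set.mem_Ico.mpr ⟨le_refl 0, hc⟩)] with ε hε
    exact hε.2
  have hev3 : ∀ᶠ ε in 𝓝[>] (0:ℝ), sf ε < 2 := hslim.eventually_lt_const (by norm_num)
  have hev4 : ∀ᶠ ε in 𝓝[>] (0:ℝ), rf ε * sf ε ^ 2 < 2 := hrs2lim.eventually_lt_const (by norm_num)
  obtain ⟨ε, hε0, hεc, hs2, hrs2⟩ := (hev1.and (hev2.and (hev3.and hev4))).exists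
  rw [hcdef] at hεc
  simp only [lt_min_iff] at hεc
  obtain ⟨⟨hεc1, hεc2⟩, hεc3, hεc4⟩ := hεc
  have hTval : T ε = a / 3 + ε * a := rfl
  have hDval : D ε = Real.sin (2 * a / 3 - ε * a) := rfl
  have hPval : P ε = Real.sin (3 * (ε * a)) / D ε := rfl
  have hRval : Rf ε = Real.sin (2 * T ε) / D ε := rfl
  have hrval : rf ε = Rf ε * Real.exp b / 2 := rfl
  have hsval : sf ε = P ε / (rf ε * Real.cos (T ε)) := rfl
  clear hT hDdef hPdef hRfdef hrfdef hsfdef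
  clear_value T D P Rf rf sf
  clear hev1 hev2 hev3 hev4 hbase hTlim hDlim hPlim hRlim hrlim hcoslim hslim hrs2lim
  -- numeric facts for this ε
  have hεa : 0 < ε * a := mul_pos hε0 ha
  have hεa2 : ε * a < 2 / 3 * a := by
    have := mul_lt_mul_of_pos_right hεc2 ha
    linarith
  have hθ0 : 0 < 3 * (ε * a) := by positivity
  have hθπ : 3 * (ε * a) < π := by
    have h := (lt_div_iff₀ (by positivity : (0:ℝ) < 3 * a)).mp hεc1
    linarith
  have hDargpos : 0 < 2 * a / 3 - ε * a := by linarith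
  have hDpos : 0 < D ε := by rw [hDval]; exact Real.sin_pos_of_pos_of_lt_pi hDargpos (by linarith)
  have h2Tlt : 2 * T ε < π := by
    have h := (lt_div_iff₀ (by linarith : (0:ℝ) < 2 * a)).mp hεc3
    rw [hTval]; linarith
  have h2Tpos : 0 < 2 * T ε := by rw [hTval]; linarith
  have hS2 : 0 < Real.sin (2 * T ε) := Real.sin_pos_of_pos_of_lt_pi h2Tpos h2Tlt
  have hTltpi2 : T ε < π / 2 := by
    have h := (lt_div_iff₀ ha).mp hεc4
    rw [hTval]; linarith
  have hTpos : 0 < T ε := by rw [hTval]; linarith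
  have hcosT : 0 < Real.cos (T ε) :=
    Real.cos_pos_of_mem_Ioo ⟨by linarith, hTltpi2⟩
  have hRpos : 0 < Rf ε := by rw [hRval]; exact div_pos hS2 hDpos
  have hPpos : 0 < P ε := by rw [hPval]; exact div_pos (Real.sin_pos_of_pos_of_lt_pi hθ0 hθπ) hDpos
  have hrpos : 0 < rf ε := by
    rw [hrval]; positivity
  have hspos : 0 < sf ε := by
    rw [hsval]; exact div_pos hPpos (by positivity)
  -- the complex identity
  have hrsP : (rf ε : ℝ) * sf ε * Real.cos (T ε) = P ε := by
    rw [hsval]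
    field_simp
  have hprod : (rf ε : ℂ) * (sf ε) * Complex.exp (2 * (T ε : ℂ) * Complex.I) * (Real.cos (T ε) : ℂ)
      = (P ε : ℂ) * Complex.exp (2 * (T ε : ℂ) * Complex.I) := by
    rw [show (rf ε : ℂ) * (sf ε) * Complex.exp (2 * (T ε : ℂ) * Complex.I) * (Real.cos (T ε) : ℂ)
        = ((rf ε * sf ε * Real.cos (T ε) : ℝ) : ℂ) * Complex.exp (2 * (T ε : ℂ) * Complex.I) by
      push_cast; ring]
    rw [hrsP]
  have him : Rf ε * Real.sin (3 * (ε * a)) = P ε * Real.sin (2 * T ε) := by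
    rw [hRval, hPval]; field_simp
  have hre : Rf ε * Real.cos (3 * (ε * a)) = 1 + P ε * Real.cos (2 * T ε) := by
    have key := Real.sin_sub (2 * T ε) (3 * (ε * a))
    rw [show 2 * T ε - 3 * (ε * a) = 2 * a / 3 - ε * a by rw [hTval]; ring] at key
    rw [← hDval] at key
    rw [hRval, hPval]
    field_simp
    simp only [← mul_assoc] at key ⊢
    linarith [key]
  have hz2 : (1 : ℂ) + (P ε : ℂ) * Complex.exp (2 * (T ε : ℂ) * Complex.I)
      = (Rf ε : ℂ) * Complex.exp (((3 * (ε * a) : ℝ) : ℂ) * Complex.I) := by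
    rw [show (2 * (T ε : ℂ) * Complex.I) = ((2 * T ε : ℝ) : ℂ) * Complex.I by push_cast; ring]
    rw [exp_ofReal_mul_I', exp_ofReal_mul_I']
    apply Complex.ext <;>
      simp only [Complex.add_re, Complex.add_im, Complex.mul_re, Complex.mul_im,
        Complex.ofReal_re, Complex.ofReal_im, Complex.I_re, Complex.I_im, Complex.one_re,
        Complex.one_im, mul_zero, zero_mul, mul_one, sub_zero, zero_sub, add_zero, zero_add,
        neg_zero, neg_neg] <;> linarith
  have hLog : Complex.log ((Rf ε : ℂ) * Complex.exp (((3 * (ε * a) : ℝ) : ℂ) * Complex.I))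
      = (Real.log (Rf ε) : ℂ) + ((3 * (ε * a) : ℝ) : ℂ) * Complex.I := by
    rw [show ((Rf ε : ℂ)) = Complex.exp ((Real.log (Rf ε) : ℝ) : ℂ) by
        rw [← Complex.ofReal_exp, Real.exp_log hRpos],
      ← Complex.exp_add, Complex.log_exp] <;> simp [hθπ.le] <;> linarith
  refine ⟨rf ε, sf ε, T ε, hrpos, hspos, hs2, by linarith, hTltpi2, hrs2, ?_, ?_⟩
  · rw [hprod, hz2]
    rw [exp_ofReal_mul_I']
    simp only [Complex.add_im, Complex.mul_im, Complex.ofReal_re, Complex.ofReal_im,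
      Complex.I_re, Complex.I_im, mul_zero, zero_mul, mul_one, add_zero, zero_add]
    exact mul_pos hRpos (Real.sin_pos_of_pos_of_lt_pi hθ0 hθπ)
  · rw [hprod, hz2, hLog]
    have hlog2r : Real.log (2 * rf ε) = Real.log (Rf ε) + b := by
      rw [show 2 * rf ε = Rf ε * Real.exp b by rw [hrval]; ring,
        Real.log_mul hRpos.ne' (Real.exp_ne_zero b), Real.log_exp]
    rw [hlog2r]
    apply Complex.ext
    · simp only [Complex.add_re, Complex.sub_re,
        Complex.mul_re, Complex.mul_im, Complex.ofReal_re, Complex.ofReal_im,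
        Complex.I_re, Complex.I_im, Complex.re_ofNat, Complex.im_ofNat,
        mul_zero, zero_mul, mul_one, sub_zero, zero_sub, add_zero, zero_add, neg_zero]
      ring
    · simp only [Complex.add_im, Complex.sub_im,
        Complex.mul_re, Complex.mul_im, Complex.ofReal_re, Complex.ofReal_im,
        Complex.I_re, Complex.I_im, Complex.re_ofNat, Complex.im_ofNat,
        mul_zero, zero_mul, mul_one, sub_zero, zero_sub, add_zero, zero_add, neg_zero, hTval]
      push_cast
      ring

theorem strip_covered (w : ℂ) (hw : |w.im| < 3 * π / 2) :
    ∃ r s t : ℝ, 0 < r ∧ 0 < s ∧ s < 2 ∧ -(π / 2) < t ∧ t < π / 2 ∧ r * s ^ 2 < 2 ∧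
      w = (Real.log (2 * r) : ℂ) + 3 * t * Complex.I
        - Complex.log (1 + (r : ℂ) * s * Complex.exp (2 * t * Complex.I) * Real.cos t) := by
  have hpi : (0:ℝ) < π := Real.pi_pos
  have hw' := abs_lt.mp hw
  rcases lt_trichotomy w.im 0 with ha | ha | ha
  · -- negative imaginary part: conjugate of the positive case
    obtain ⟨r, s, t, h1, h2, h3, h4, h5, h6, him, heq⟩ :=
      strip_aux (-w.im) w.re (by linarith) (by linarith [hw'.1])
    refine ⟨r, s, -t, h1, h2, h3, by linarith, by linarith, h6, ?_⟩
    have harg : (1 + (r:ℂ) * s * Complex.exp (2 * t * Complex.I) * Real.cos t).arg ≠ π :=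
      fun h => him.ne' (Complex.arg_eq_pi_iff.mp h).2
    have hconj := congrArg (starRingEnd ℂ) heq
    rw [Real.cos_neg, show ((-t:ℝ):ℂ) = -(t:ℂ) by push_cast; ring]
    rw [show ((2:ℂ) * -(t:ℂ) * Complex.I) = (starRingEnd ℂ) (2 * (t:ℂ) * Complex.I) by
      simp only [map_mul, Complex.conj_I, Complex.conj_ofReal, map_ofNat]; ring]
    rw [Complex.exp_conj]
    rw [show (1 + (r:ℂ) * s * (starRingEnd ℂ) (Complex.exp (2 * (t:ℂ) * Complex.I)) * Real.cos t)
        = (starRingEnd ℂ) (1 + (r:ℂ) * s * Complex.exp (2 * (t:ℂ) * Complex.I) * Real.cos t) by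
      simp only [map_add, map_mul, map_one, Complex.conj_ofReal]]
    rw [Complex.log_conj _ harg]
    simp only [map_add, map_sub, map_mul, map_ofNat, Complex.conj_ofReal, Complex.conj_I] at hconj
    rw [Complex.ofReal_neg] at hconj
    rw [← Complex.re_add_im w]
    linear_combination hconj
  · -- real case
    set ρ := Real.exp w.re / 2 with hρ
    have hρpos : 0 < ρ := by positivity
    have hexp : 0 < Real.exp w.re := Real.exp_pos _
    refine ⟨(1 + ρ) * Real.exp w.re / 2, 1 / (1 + ρ), 0, by positivity, by positivity, ?_,
      by linarith, by linarith, ?_, ?_⟩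
    · rw [div_lt_iff₀ (by positivity)]; linarith
    · have h : ((1 + ρ) * Real.exp w.re / 2) * (1 / (1 + ρ)) ^ 2
          = Real.exp w.re / (2 * (1 + ρ)) := by
        field_simp
      rw [h, div_lt_iff₀ (by positivity)]
      nlinarith
    · have hrs : ((1 + ρ) * Real.exp w.re / 2) * (1 / (1 + ρ)) = ρ := by
        field_simp
        rw [hρ]
        ring
      have hlog2r : Real.log (2 * ((1 + ρ) * Real.exp w.re / 2)) = Real.log (1 + ρ) + w.re := by
        rw [show 2 * ((1 + ρ) * Real.exp w.re / 2) = (1 + ρ) * Real.exp w.re by ring,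
          Real.log_mul (by positivity) (Real.exp_ne_zero _), Real.log_exp]
      simp only [Complex.ofReal_zero, mul_zero, zero_mul, Complex.exp_zero, Real.cos_zero,
        Complex.ofReal_one, mul_one, add_zero]
      rw [← Complex.ofReal_mul, hrs,
        show (1:ℂ) + (ρ:ℂ) = ((1 + ρ : ℝ):ℂ) by push_cast; ring,
        ← Complex.ofReal_log (by positivity), hlog2r]
      apply Complex.ext
      · simp
      · simp [ha]
  · obtain ⟨r, s, t, h1, h2, h3, h4, h5, h6, him, heq⟩ :=
      strip_aux w.im w.re ha (by linarith [hw'.2])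
    refine ⟨r, s, t, h1, h2, h3, h4, h5, h6, ?_⟩
    rw [← Complex.re_add_im w]
    exact heq
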